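/- In ⊗³ 𝕂⁶ (𝕂 = ℝ or ℂ), the symmetric tensor y := e₁ ∨ e₂ ∨ e₆ + e₁ ∨ e₃ ∨ e₅ + e₂ ∨ e₃ ∨ e₄ has symmetric decomposable rank exactly 3; in particular, y cannot be written as a sum of two decomposable symmetric tensors. -/

import Mathlib

open scoped BigOperators

/-- The linear map permuting tensor factors: `(permLin η z) j = z (j ∘ η)`. -/
noncomputable def permLin (𝕜 : Type*) [RCLike 𝕜] (d n : ℕ) (η : Equiv.Perm (Fin d)) :
    EuclideanSpace 𝕜 (Fin d → Fin n) →ₗ[𝕜] EuclideanSpace 𝕜 (Fin d → Fin n) where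
  toFun z := WithLp.toLp 2 (fun j => z (j ∘ η))
  map_add' _ _ := rfl
  map_smul' _ _ := rfl

/-- A tensor is symmetric if it is invariant under all permutations of factors. -/
def IsSymTensor {𝕜 : Type*} [RCLike 𝕜] {d n : ℕ}
    (z : EuclideanSpace 𝕜 (Fin d → Fin n)) : Prop :=
  ∀ η : Equiv.Perm (Fin d), permLin 𝕜 d n η z = z

/-- The elementary tensor `x 1 ⊗ ⋯ ⊗ x d`. -/
noncomputable def eTensor {𝕜 : Type*} [RCLike 𝕜] {d n : ℕ}
    (x : Fin d → EuclideanSpace 𝕜 (Fin n)) : EuclideanSpace 𝕜 (Fin d → Fin n) :=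
  WithLp.toLp 2 (fun j => ∏ i, x i (j i))

/-- The symmetrization operator `σ`. -/
noncomputable def symmetrize {𝕜 : Type*} [RCLike 𝕜] {d n : ℕ}
    (z : EuclideanSpace 𝕜 (Fin d → Fin n)) : EuclideanSpace 𝕜 (Fin d → Fin n) :=
  ((d.factorial : 𝕜)⁻¹) • ∑ η : Equiv.Perm (Fin d), permLin 𝕜 d n η z

/-- The decomposable symmetric tensor `x 1 ∨ ⋯ ∨ x d`. -/
noncomputable def vee {𝕜 : Type*} [RCLike 𝕜] {d n : ℕ}
    (x : Fin d → EuclideanSpace 𝕜 (Fin n)) : EuclideanSpace 𝕜 (Fin d → Fin n) :=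
  symmetrize (eTensor x)

/-- The tensor rank. -/
noncomputable def tensorRank {𝕜 : Type*} [RCLike 𝕜] {d n : ℕ}
    (z : EuclideanSpace 𝕜 (Fin d → Fin n)) : ℕ :=
  sInf {r : ℕ | ∃ v : Fin r → Fin d → EuclideanSpace 𝕜 (Fin n), z = ∑ i, eTensor (v i)}

/-- The symmetric decomposable rank. -/
noncomputable def symDecRank {𝕜 : Type*} [RCLike 𝕜] {d n : ℕ}
    (z : EuclideanSpace 𝕜 (Fin d → Fin n)) : ℕ :=
  sInf {r : ℕ | ∃ v : Fin r → Fin d → EuclideanSpace 𝕜 (Fin n), z = ∑ i, vee (v i)}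

/-- The injective (spectral) norm. -/
noncomputable def injNorm {𝕜 : Type*} [RCLike 𝕜] {d n : ℕ}
    (z : EuclideanSpace 𝕜 (Fin d → Fin n)) : ℝ :=
  sSup {c : ℝ | ∃ y : Fin d → EuclideanSpace 𝕜 (Fin n),
    (∀ i, ‖y i‖ = 1) ∧ c = ‖(inner 𝕜 (eTensor y) z)‖}

/-- The projective (nuclear) norm. -/
noncomputable def projNorm {𝕜 : Type*} [RCLike 𝕜] {d n : ℕ}
    (z : EuclideanSpace 𝕜 (Fin d → Fin n)) : ℝ :=
  sInf {c : ℝ | ∃ (r : ℕ) (v : Fin r → Fin d → EuclideanSpace 𝕜 (Fin n)),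
    z = ∑ i, eTensor (v i) ∧ c = ∑ i, ∏ j, ‖v i j‖}

/-! The slices `Y i := y(eᵢ, ·, ·)` of `y` are six linearly independent symmetric matrices.
If `y = a₀ ∨ a₁ ∨ a₂ + b₀ ∨ b₁ ∨ b₂`, every slice is a combination of the six matrices
`u vᵀ + v uᵀ` with `{u, v}` two of the `aₖ` or two of the `bₖ`, so these six matrices span the
same space as the slices. Every matrix in that space vanishes on the block `{3,4,5}²` and at
`(1,4)`, and has equal `(1,5)` and `(2,4)` entries (indices from 0, as in the statement). For
`u vᵀ + v uᵀ` the first condition forces `u` or `v` to vanish on `{3,4,5}`, and then the other two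
kill the `(1,5)` entry. But `Y 0`, which lies in the span of the six, has `(1,5)` entry `1/6`. -/

open Equiv Finset Matrix Module Submodule

theorem univ_perm_fin_three : (univ : Finset (Perm (Fin 3))) =
    {1, swap 0 1, swap 0 2, swap 1 2, swap 0 1 * swap 1 2, swap 1 2 * swap 0 1} := by
  decide

theorem permanent_fin_three {R : Type*} [CommRing R] (A : Matrix (Fin 3) (Fin 3) R) :
    permanent A = A 0 0 * A 1 1 * A 2 2 + A 0 0 * A 1 2 * A 2 1
      + A 0 1 * A 1 0 * A 2 2 + A 0 1 * A 1 2 * A 2 0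
      + A 0 2 * A 1 0 * A 2 1 + A 0 2 * A 1 1 * A 2 0 := by
  rw [permanent, univ_perm_fin_three]
  repeat rw [sum_insert (by decide)]
  simp [Fin.prod_univ_three, swap_apply_of_ne_of_ne]
  ring

section SymProd

variable {R ι : Type*} [CommRing R]

def symProd (u v : ι → R) : Matrix ι ι R := vecMulVec u v + vecMulVec v u

theorem symProd_apply (u v : ι → R) (p q : ι) : symProd u v p q = u p * v q + v p * u q := rfl

theorem symProd_comm (u v : ι → R) : symProd u v = symProd v u := add_comm _ _

theorem symProd_eq_zero_on [NoZeroDivisors R] [NeZero (2 : R)] {u v : ι → R} {s : Set ι}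
    (h : ∀ p ∈ s, ∀ q ∈ s, symProd u v p q = 0) : (∀ p ∈ s, u p = 0) ∨ (∀ p ∈ s, v p = 0) := by
  refine or_iff_not_imp_left.2 fun hu q hq => ?_
  push Not at hu
  obtain ⟨p, hp, hup⟩ := hu
  have hvp : v p = 0 := by
    have h2 : 2 * (u p * v p) = 0 := by rw [← h p hp p hp, symProd_apply]; ring
    simpa [two_ne_zero, hup] using h2
  simpa [symProd_apply, hvp, hup] using h p hp q hq

theorem symProd_apply_one_five_eq_zero [NoZeroDivisors R] [NeZero (2 : R)] {u v : Fin 6 → R}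
    (hblock : ∀ p ∈ Set.Ici 3, ∀ q ∈ Set.Ici 3, symProd u v p q = 0)
    (h14 : symProd u v 1 4 = 0) (h15 : symProd u v 1 5 = symProd u v 2 4) :
    symProd u v 1 5 = 0 := by
  have key : ∀ u v : Fin 6 → R, u 4 = 0 → u 5 = 0 → symProd u v 1 4 = 0 →
      symProd u v 1 5 = symProd u v 2 4 → symProd u v 1 5 = 0 := by
    intro u v hu4 hu5 h14 h15
    simp only [symProd_apply, hu4, hu5, mul_zero, add_zero] at h14 h15 ⊢
    rcases mul_eq_zero.1 h14 with h | h
    · simp [h]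
    · simpa [h] using h15
  rcases symProd_eq_zero_on hblock with hu | hv
  · exact key u v (hu 4 (by decide)) (hu 5 (by decide)) h14 h15
  · rw [symProd_comm] at h14 h15 ⊢
    exact key v u (hv 4 (by decide)) (hv 5 (by decide)) h14 h15

end SymProd

theorem linearIndependent_of_apply_eq_zero_of_ne {R ι m n : Type*} [Ring R] [NoZeroDivisors R]
    [Fintype ι] (M : ι → Matrix m n R) (p : ι → m) (q : ι → n)
    (hdiag : ∀ i, M i (p i) (q i) ≠ 0) (hoff : ∀ i j, i ≠ j → M j (p i) (q i) = 0) :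
    LinearIndependent R M := by
  classical
  refine Fintype.linearIndependent_iff.2 fun g hg i => ?_
  have hi := congr_fun₂ hg (p i) (q i)
  rw [Matrix.sum_apply, sum_eq_single i (fun j _ hj => by simp [hoff i j (Ne.symm hj)])
    (by simp)] at hi
  simpa [hdiag i] using hi

section Vee

variable {𝕜 : Type*} [RCLike 𝕜] {d n : ℕ}

theorem vee_apply (x : Fin d → EuclideanSpace 𝕜 (Fin n)) (j : Fin d → Fin n) :
    vee x j = (d.factorial : 𝕜)⁻¹ * (of fun k i => x i (j k)).permanent := by
  simp only [vee, symmetrize, PiLp.smul_apply, WithLp.ofLp_sum, Finset.sum_apply, smul_eq_mul]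
  rfl

theorem vee_zero [NeZero d] : vee (0 : Fin d → EuclideanSpace 𝕜 (Fin n)) = 0 := by
  ext j
  simp [vee_apply, permanent, NeZero.ne d]

def permCount (j t : Fin d → Fin n) : ℕ := #{η : Perm (Fin d) | ∀ i, j (η i) = t i}

theorem vee_single_apply (t j : Fin d → Fin n) :
    vee (fun i => EuclideanSpace.single (t i) (1 : 𝕜)) j = (d.factorial : 𝕜)⁻¹ * permCount j t := by
  simp [vee_apply, permanent, permCount, PiLp.single_apply, prod_boole]

theorem vee_single_fin_three_apply (s t u : Fin n) (j : Fin 3 → Fin n) :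
    vee ![EuclideanSpace.single s (1 : 𝕜), EuclideanSpace.single t 1, EuclideanSpace.single u 1] j =
      (6 : 𝕜)⁻¹ * permCount j ![s, t, u] := by
  have h : ![EuclideanSpace.single s (1 : 𝕜), EuclideanSpace.single t 1,
      EuclideanSpace.single u 1] = fun i => EuclideanSpace.single (![s, t, u] i) 1 := by
    ext i : 1
    fin_cases i <;> rfl
  rw [h, vee_single_apply]
  norm_num [Nat.factorial]

theorem symDecRank_eq_three [NeZero d] {z : EuclideanSpace 𝕜 (Fin d → Fin n)}
    (h3 : ∃ v : Fin 3 → Fin d → EuclideanSpace 𝕜 (Fin n), z = ∑ i, vee (v i))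
    (h2 : ¬∃ a b, z = vee a + vee b) : symDecRank z = 3 := by
  refine le_antisymm (Nat.sInf_le h3) (le_csInf ⟨3, h3⟩ fun r ⟨v, hv⟩ => ?_)
  by_contra! hr
  interval_cases r
  · exact h2 ⟨0, 0, by simp [hv, vee_zero]⟩
  · exact h2 ⟨v 0, 0, by simp [hv, vee_zero]⟩
  · exact h2 ⟨v 0, v 1, by simp [hv, Fin.sum_univ_two]⟩

end Vee

section Slice

variable {𝕜 : Type*} [RCLike 𝕜] {n : ℕ}

def tensorSlice (z : EuclideanSpace 𝕜 (Fin 3 → Fin n)) (i : Fin n) : Matrix (Fin n) (Fin n) 𝕜 :=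
  of fun p q => z ![i, p, q]

def symProdCompl (x : Fin 3 → EuclideanSpace 𝕜 (Fin n)) (k : Fin 3) : Matrix (Fin n) (Fin n) 𝕜 :=
  symProd (x (k + 1)) (x (k + 2))

theorem tensorSlice_vee (x : Fin 3 → EuclideanSpace 𝕜 (Fin n)) (i : Fin n) :
    tensorSlice (vee x) i = (6 : 𝕜)⁻¹ • ∑ k, x k i • symProdCompl x k := by
  ext p q
  simp only [tensorSlice, of_apply, vee_apply, permanent_fin_three]
  simp [Fin.sum_univ_three, symProdCompl, symProd_apply]
  ring

theorem span_tensorSlice_vee_add_vee_le (a b : Fin 3 → EuclideanSpace 𝕜 (Fin n)) :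
    span 𝕜 (Set.range (tensorSlice (vee a + vee b))) ≤
      span 𝕜 (Set.range (Sum.elim (symProdCompl a) (symProdCompl b))) := by
  rw [span_le]
  rintro _ ⟨i, rfl⟩
  have hadd : tensorSlice (vee a + vee b) i = tensorSlice (vee a) i + tensorSlice (vee b) i := rfl
  rw [hadd, tensorSlice_vee, tensorSlice_vee]
  exact add_mem
    (smul_mem _ _ (sum_mem fun k _ => smul_mem _ _ (subset_span ⟨Sum.inl k, rfl⟩)))
    (smul_mem _ _ (sum_mem fun k _ => smul_mem _ _ (subset_span ⟨Sum.inr k, rfl⟩)))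

theorem symProdCompl_mem_span_tensorSlice (a b : Fin 3 → EuclideanSpace 𝕜 (Fin n))
    (hrank : 6 ≤ finrank 𝕜 (span 𝕜 (Set.range (tensorSlice (vee a + vee b)))))
    (k : Fin 3 ⊕ Fin 3) :
    Sum.elim (symProdCompl a) (symProdCompl b) k ∈
      span 𝕜 (Set.range (tensorSlice (vee a + vee b))) := by
  have hcard : finrank 𝕜 (span 𝕜 (Set.range (Sum.elim (symProdCompl a) (symProdCompl b)))) ≤ 6 :=
    (finrank_range_le_card _).trans (by simp)
  rw [eq_of_le_of_finrank_le (span_tensorSlice_vee_add_vee_le a b) (hcard.trans hrank)]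
  exact subset_span ⟨k, rfl⟩

end Slice

noncomputable def exampleTensor (𝕜 : Type*) [RCLike 𝕜] : EuclideanSpace 𝕜 (Fin 3 → Fin 6) :=
  vee ![EuclideanSpace.single 0 1, EuclideanSpace.single 1 1, EuclideanSpace.single 5 1]
    + vee ![EuclideanSpace.single 0 1, EuclideanSpace.single 2 1, EuclideanSpace.single 4 1]
    + vee ![EuclideanSpace.single 1 1, EuclideanSpace.single 2 1, EuclideanSpace.single 3 1]

def exampleCount (j : Fin 3 → Fin 6) : ℕ :=
  permCount j ![0, 1, 5] + permCount j ![0, 2, 4] + permCount j ![1, 2, 3]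

section Example

variable {𝕜 : Type*} [RCLike 𝕜]

theorem exampleTensor_apply (j : Fin 3 → Fin 6) :
    exampleTensor 𝕜 j = (6 : 𝕜)⁻¹ * exampleCount j := by
  simp only [exampleTensor, PiLp.add_apply, vee_single_fin_three_apply, exampleCount]
  push_cast
  ring

theorem exampleTensor_eq_sum : exampleTensor 𝕜 = ∑ i, vee
    (![![EuclideanSpace.single 0 1, EuclideanSpace.single 1 1, EuclideanSpace.single 5 1],
      ![EuclideanSpace.single 0 1, EuclideanSpace.single 2 1, EuclideanSpace.single 4 1],
      ![EuclideanSpace.single 1 1, EuclideanSpace.single 2 1, EuclideanSpace.single 3 1]] i) := by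
  rw [Fin.sum_univ_three]
  rfl

theorem linearIndependent_tensorSlice_exampleTensor :
    LinearIndependent 𝕜 (tensorSlice (exampleTensor 𝕜)) := by
  let p : Fin 6 → Fin 6 := ![1, 0, 0, 1, 0, 0]
  let q : Fin 6 → Fin 6 := ![5, 5, 4, 2, 2, 1]
  -- `{i, p i, q i}` is one of the three index triples of `y`; `{j, p i, q i}` is none for `j ≠ i`.
  have hcount : ∀ i j, exampleCount ![j, p i, q i] = if i = j then 1 else 0 := by decide
  refine linearIndependent_of_apply_eq_zero_of_ne _ p q (fun i => ?_) (fun i j hij => ?_)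
  · simp [tensorSlice, exampleTensor_apply, hcount]
  · simp [tensorSlice, exampleTensor_apply, hcount, hij]

theorem exists_eq_of_mem_span_tensorSlice_exampleTensor {M : Matrix (Fin 6) (Fin 6) 𝕜}
    (hM : M ∈ span 𝕜 (Set.range (tensorSlice (exampleTensor 𝕜)))) :
    ∃ c : Fin 6 → 𝕜, ∀ p q, M p q = (6 : 𝕜)⁻¹ * ∑ i, c i * exampleCount ![i, p, q] := by
  obtain ⟨c, rfl⟩ := (mem_span_range_iff_exists_fun 𝕜).1 hM
  exact ⟨c, fun p q => by
    simp [Matrix.sum_apply, tensorSlice, exampleTensor_apply, mul_sum, mul_left_comm]⟩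

theorem symProd_apply_one_five_eq_zero_of_mem_span {u v : Fin 6 → 𝕜}
    (h : symProd u v ∈ span 𝕜 (Set.range (tensorSlice (exampleTensor 𝕜)))) :
    symProd u v 1 5 = 0 := by
  obtain ⟨c, hc⟩ := exists_eq_of_mem_span_tensorSlice_exampleTensor h
  have hblock : ∀ p q : Fin 6, 3 ≤ p → 3 ≤ q → ∀ i, exampleCount ![i, p, q] = 0 := by decide
  have h14 : ∀ i, exampleCount ![i, 1, 4] = 0 := by decide
  have h15 : ∀ i, exampleCount ![i, 1, 5] = exampleCount ![i, 2, 4] := by decide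
  refine symProd_apply_one_five_eq_zero (fun p hp q hq => ?_) ?_ ?_
  · simp [hc, hblock p q hp hq]
  · simp [hc, h14]
  · simp [hc, h15]

theorem exampleTensor_ne_vee_add_vee (a b : Fin 3 → EuclideanSpace 𝕜 (Fin 6)) :
    exampleTensor 𝕜 ≠ vee a + vee b := by
  intro h
  have hrank : 6 ≤ finrank 𝕜 (span 𝕜 (Set.range (tensorSlice (vee a + vee b)))) := by
    rw [← h, finrank_span_eq_card linearIndependent_tensorSlice_exampleTensor, Fintype.card_fin]
  have hzero : ∀ k, Sum.elim (symProdCompl a) (symProdCompl b) k 1 5 = 0 := by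
    intro k
    have hk := symProdCompl_mem_span_tensorSlice a b hrank k
    rw [← h] at hk
    rcases k with k | k <;> exact symProd_apply_one_five_eq_zero_of_mem_span hk
  obtain ⟨c, hc⟩ := (mem_span_range_iff_exists_fun 𝕜).1
    (span_tensorSlice_vee_add_vee_le a b (subset_span ⟨0, rfl⟩))
  have h15 := congr_fun₂ hc 1 5
  rw [← h, tensorSlice, of_apply, exampleTensor_apply,
    show exampleCount ![0, 1, 5] = 1 by decide] at h15
  simp [Matrix.sum_apply, hzero] at h15

end Example

/-- In `⊗³ 𝕂⁶`, the symmetric tensor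
`y = e₁ ∨ e₂ ∨ e₆ + e₁ ∨ e₃ ∨ e₅ + e₂ ∨ e₃ ∨ e₄` has symmetric decomposable rank exactly 3;
in particular it is not a sum of two decomposable symmetric tensors. -/
theorem symDecRank_example_eq_three
    {𝕜 : Type*} [RCLike 𝕜] :
    letI e : Fin 6 → EuclideanSpace 𝕜 (Fin 6) := fun i => EuclideanSpace.single i 1
    letI y : EuclideanSpace 𝕜 (Fin 3 → Fin 6) :=
      vee ![e 0, e 1, e 5] + vee ![e 0, e 2, e 4] + vee ![e 1, e 2, e 3]
    symDecRank y = 3 ∧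
      ¬ ∃ a b : Fin 3 → EuclideanSpace 𝕜 (Fin 6), y = vee a + vee b := by
  have hne : ¬∃ a b, exampleTensor 𝕜 = vee a + vee b :=
    fun ⟨a, b, h⟩ => exampleTensor_ne_vee_add_vee a b h
  exact ⟨symDecRank_eq_three ⟨_, exampleTensor_eq_sum⟩ hne, hne⟩
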